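/- (Theorem 2.3, first identity, q-case.) Let n ∈ ℕ, β₁, β₂ ∈ (0,1) and let m₁ be a natural number with m₁ ≤ n. Then the m₁-th q-factorial moment of the first coordinate of the q-trinomial distribution of the second kind satisfies ∑_{x₁=0}^{n} ∑_{x₂=0}^{n−x₁} [x₁]_{m₁,q} · u(x₁,x₂) = [n]_{m₁,q} · β₁^{m₁}. -/

import Mathlib

open Finset

/-- q-integer `[k]_q = (1 - q^k)/(1 - q)`. -/
noncomputable def qInt (q : ℝ) (k : ℤ) : ℝ := (1 - q ^ k) / (1 - q)

/-- q-factorial `[n]_q! = ∏_{i=1}^n [i]_q`. -/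
noncomputable def qFact (q : ℝ) (n : ℕ) : ℝ := ∏ i ∈ Finset.Icc 1 n, qInt q (i : ℤ)

/-- q-binomial coefficient `C_q(n,k)`. -/
noncomputable def qBinom (q : ℝ) (n k : ℕ) : ℝ := qFact q n / (qFact q k * qFact q (n - k))

/-- q-falling factorial `[u]_{m,q} = ∏_{i=1}^m [u-i+1]_q`. -/
noncomputable def qFall (q : ℝ) (u : ℤ) (m : ℕ) : ℝ := ∏ i ∈ Finset.Icc 1 m, qInt q (u - (i : ℤ) + 1)

/-- `[k]_{q⁻¹} = q^{1-k} · [k]_q`. -/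
noncomputable def qIntInv (q : ℝ) (k : ℤ) : ℝ := q ^ (1 - k) * qInt q k

/-- `[u]_{m,q⁻¹} = ∏_{i=1}^m [u-i+1]_{q⁻¹}`. -/
noncomputable def qFallInv (q : ℝ) (u : ℤ) (m : ℕ) : ℝ := ∏ i ∈ Finset.Icc 1 m, qIntInv q (u - (i : ℤ) + 1)

/-- `b(k) = k(k-1)/2`. -/
def bb (k : ℕ) : ℕ := k * (k - 1) / 2

/-- `⟨1 ⊕ α⟩_m = ∏_{i=1}^m (1 + α q^{i-1})`. -/
noncomputable def oplus (q α : ℝ) (m : ℕ) : ℝ := ∏ i ∈ Finset.Icc 1 m, (1 + α * q ^ (i - 1))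

/-- `⟨1 ⊖ β⟩_m = ∏_{i=1}^m (1 - β q^{i-1})`. -/
noncomputable def ominus (q β : ℝ) (m : ℕ) : ℝ := ∏ i ∈ Finset.Icc 1 m, (1 - β * q ^ (i - 1))

/-- q-trinomial coefficient `T_q(n; x₁, x₂)`. -/
noncomputable def qTri (q : ℝ) (n x1 x2 : ℕ) : ℝ :=
  qFact q n / (qFact q x1 * qFact q x2 * qFact q (n - x1 - x2))

/-- pmf of the q-trinomial distribution of the second kind. -/
noncomputable def upmf (q b1 b2 : ℝ) (n x1 x2 : ℕ) : ℝ :=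
  qTri q n x1 x2 * b1 ^ x1 * b2 ^ x2 * ominus q b1 (n - x1) * ominus q b2 (n - x1 - x2)

/-!
Writing `T_q(n; x₁, x₂) = C_q(n, x₁) · C_q(n - x₁, x₂)`, the sum over `x₂` is the total mass of
a q-binomial distribution, which is `1` by the q-Pascal rule. What is left is the `m`-th
q-factorial moment of a q-binomial distribution, and
`[k]_{m,q} · C_q(n, k) = [n]_{m,q} · C_q(n - m, k - m)` turns it into `[n]_{m,q} · β^m` times
another total mass.
-/

theorem Finset.sum_range_succ_eq_sum_add_of_shift {M : Type*} [AddCommMonoid M] (f a b : ℕ → M)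
    (n : ℕ) (h₀ : f 0 = a 0) (hsucc : ∀ k < n, f (k + 1) = a (k + 1) + b k)
    (hlast : f (n + 1) = b n) :
    ∑ k ∈ range (n + 2), f k = ∑ k ∈ range (n + 1), (a k + b k) := by
  have hmid : ∑ k ∈ range n, f (k + 1) = ∑ k ∈ range n, a (k + 1) + ∑ k ∈ range n, b k := by
    rw [← sum_add_distrib]
    exact sum_congr rfl fun k hk => hsucc k (mem_range.mp hk)
  rw [sum_range_succ, sum_range_succ', hmid, h₀, hlast, sum_add_distrib, sum_range_succ' a,
    sum_range_succ b]
  abel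

section QAnalogues

variable {q : ℝ}

theorem qInt_natCast (k : ℕ) : qInt q k = (1 - q ^ k) / (1 - q) := by
  simp [qInt]

theorem qInt_add (hq : q ≠ 1) (a b : ℕ) :
    qInt q ((a + b : ℕ) : ℤ) = qInt q a + q ^ a * qInt q b := by
  have : 1 - q ≠ 0 := sub_ne_zero.mpr hq.symm
  simp only [qInt_natCast]
  field_simp
  ring

theorem qFact_zero : qFact q 0 = 1 := by
  simp [qFact]

theorem qFact_succ (n : ℕ) : qFact q (n + 1) = qFact q n * qInt q ((n + 1 : ℕ) : ℤ) :=
  prod_Icc_succ_top (Nat.le_add_left 1 n) _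

theorem qFall_succ (u : ℤ) (m : ℕ) :
    qFall q u (m + 1) = qFall q u m * qInt q (u - m) := by
  rw [qFall, prod_Icc_succ_top (Nat.le_add_left 1 m)]
  congr 2
  push_cast
  ring

theorem ominus_succ (θ : ℝ) (m : ℕ) : ominus q θ (m + 1) = ominus q θ m * (1 - θ * q ^ m) := by
  rw [ominus, prod_Icc_succ_top (Nat.le_add_left 1 m)]
  rfl

theorem qInt_pos (hq0 : 0 < q) (hq1 : q < 1) {k : ℕ} (hk : 0 < k) : 0 < qInt q k := by
  rw [qInt_natCast]
  have : q ^ k < 1 := pow_lt_one₀ hq0.le hq1 hk.ne'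
  exact div_pos (by linarith) (by linarith)

theorem qFact_pos (hq0 : 0 < q) (hq1 : q < 1) (n : ℕ) : 0 < qFact q n :=
  prod_pos fun _ hi => qInt_pos hq0 hq1 (mem_Icc.mp hi).1

theorem qFall_natCast_eq_zero {x m : ℕ} (h : x < m) : qFall q x m = 0 := by
  apply prod_eq_zero (mem_Icc.mpr ⟨Nat.le_add_left 1 x, h⟩)
  simp [qInt]

theorem qFact_eq_qFact_sub_mul_qFall {x m : ℕ} (h : m ≤ x) :
    qFact q x = qFact q (x - m) * qFall q x m := by
  induction m with
  | zero => simp [qFall]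
  | succ m ih =>
    obtain ⟨r, rfl⟩ := Nat.exists_eq_add_of_le h
    rw [ih (by omega), qFall_succ, show m + 1 + r - m = r + 1 by omega, qFact_succ,
      show m + 1 + r - (m + 1) = r by omega]
    push_cast
    ring_nf

section Positive

variable (hq0 : 0 < q) (hq1 : q < 1)
include hq0 hq1

theorem qBinom_zero_right (n : ℕ) : qBinom q n 0 = 1 := by
  simp [qBinom, qFact_zero, (qFact_pos hq0 hq1 n).ne']

theorem qBinom_self (n : ℕ) : qBinom q n n = 1 := by
  simp [qBinom, qFact_zero, (qFact_pos hq0 hq1 n).ne']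

theorem qBinom_succ_succ {n k : ℕ} (h : k < n) :
    qBinom q (n + 1) (k + 1) = qBinom q n (k + 1) + q ^ (n - k) * qBinom q n k := by
  obtain ⟨r, rfl⟩ := Nat.exists_eq_add_of_lt h
  have hsplit : qInt q ((k + r + 1 + 1 : ℕ) : ℤ) = qInt q ((r + 1 : ℕ) : ℤ) +
      q ^ (r + 1) * qInt q ((k + 1 : ℕ) : ℤ) := by
    rw [← qInt_add hq1.ne]
    ring_nf
  have := qFact_pos hq0 hq1 k
  have := qFact_pos hq0 hq1 r
  have := qInt_pos hq0 hq1 (Nat.succ_pos k)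
  have := qInt_pos hq0 hq1 (Nat.succ_pos r)
  simp only [qBinom, show k + r + 1 + 1 - (k + 1) = r + 1 by omega,
    show k + r + 1 - (k + 1) = r by omega, show k + r + 1 - k = r + 1 by omega]
  rw [qFact_succ (k + r + 1), qFact_succ k, qFact_succ r, hsplit]
  field_simp

theorem sum_qBinom_mul_ominus (θ : ℝ) (n : ℕ) :
    ∑ k ∈ range (n + 1), qBinom q n k * θ ^ k * ominus q θ (n - k) = 1 := by
  induction n with
  | zero => simp [qBinom_zero_right hq0 hq1, ominus]
  | succ n ih =>
    set f := fun k => qBinom q n k * θ ^ k * ominus q θ (n - k)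
    -- q-Pascal splits row `n + 1` into `f k · (1 - θ q^(n-k))` and `θ q^(n-k) · f k`.
    calc ∑ k ∈ range (n + 2), qBinom q (n + 1) k * θ ^ k * ominus q θ (n + 1 - k)
        = ∑ k ∈ range (n + 1), (f k * (1 - θ * q ^ (n - k)) + θ * q ^ (n - k) * f k) := by
          apply sum_range_succ_eq_sum_add_of_shift
          · simp [f, qBinom_zero_right hq0 hq1, ominus_succ]
          · intro k hk
            simp only [f]
            rw [qBinom_succ_succ hq0 hq1 hk, show n + 1 - (k + 1) = n - (k + 1) + 1 by omega,
              show n - k = n - (k + 1) + 1 by omega, ominus_succ]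
            ring
          · simp [f, qBinom_self hq0 hq1, ominus]
            ring
      _ = ∑ k ∈ range (n + 1), f k := sum_congr rfl fun k _ => by ring
      _ = 1 := ih

theorem qTri_eq_qBinom_mul_qBinom (n x1 x2 : ℕ) :
    qTri q n x1 x2 = qBinom q n x1 * qBinom q (n - x1) x2 := by
  have := (qFact_pos hq0 hq1 (n - x1)).ne'
  simp only [qTri, qBinom]
  field_simp

theorem sum_upmf_eq (b1 b2 : ℝ) (n x1 : ℕ) :
    ∑ x2 ∈ range (n - x1 + 1), upmf q b1 b2 n x1 x2 =
      qBinom q n x1 * b1 ^ x1 * ominus q b1 (n - x1) :=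
  calc ∑ x2 ∈ range (n - x1 + 1), upmf q b1 b2 n x1 x2
      = qBinom q n x1 * b1 ^ x1 * ominus q b1 (n - x1) *
          ∑ x2 ∈ range (n - x1 + 1),
            qBinom q (n - x1) x2 * b2 ^ x2 * ominus q b2 (n - x1 - x2) := by
        rw [mul_sum]
        refine sum_congr rfl fun x2 _ => ?_
        rw [upmf, qTri_eq_qBinom_mul_qBinom hq0 hq1]
        ring
    _ = qBinom q n x1 * b1 ^ x1 * ominus q b1 (n - x1) := by
        rw [sum_qBinom_mul_ominus hq0 hq1, mul_one]

theorem qFall_mul_qBinom {n k m : ℕ} (hmk : m ≤ k) (hkn : k ≤ n) :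
    qFall q k m * qBinom q n k = qFall q n m * qBinom q (n - m) (k - m) := by
  have hk := qFact_eq_qFact_sub_mul_qFall (q := q) hmk
  have hfall : qFall q k m ≠ 0 := right_ne_zero_of_mul (hk ▸ (qFact_pos hq0 hq1 k).ne')
  have := (qFact_pos hq0 hq1 (k - m)).ne'
  have := (qFact_pos hq0 hq1 (n - k)).ne'
  rw [qBinom, qBinom, hk, qFact_eq_qFact_sub_mul_qFall (hmk.trans hkn),
    show n - m - (k - m) = n - k by omega]
  field_simp

theorem sum_qFall_mul_qBinom_mul_ominus (θ : ℝ) (n m : ℕ) :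
    ∑ k ∈ range (n + 1), qFall q k m * (qBinom q n k * θ ^ k * ominus q θ (n - k)) =
      qFall q n m * θ ^ m := by
  rcases lt_or_ge n m with hnm | hmn
  · rw [qFall_natCast_eq_zero hnm, zero_mul]
    refine sum_eq_zero fun k hk => ?_
    rw [qFall_natCast_eq_zero (by rw [mem_range] at hk; omega), zero_mul]
  obtain ⟨r, rfl⟩ := Nat.exists_eq_add_of_le hmn
  have hlow : ∑ k ∈ range m,
      qFall q k m * (qBinom q (m + r) k * θ ^ k * ominus q θ (m + r - k)) = 0 :=
    sum_eq_zero fun k hk => by rw [qFall_natCast_eq_zero (mem_range.mp hk), zero_mul]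
  calc ∑ k ∈ range (m + r + 1),
        qFall q k m * (qBinom q (m + r) k * θ ^ k * ominus q θ (m + r - k))
      = ∑ j ∈ range (r + 1),
          qFall q (m + r : ℕ) m * θ ^ m * (qBinom q r j * θ ^ j * ominus q θ (r - j)) := by
        rw [add_assoc, sum_range_add, hlow, zero_add]
        refine sum_congr rfl fun j hj => ?_
        have key := qFall_mul_qBinom hq0 hq1 (Nat.le_add_right m j)
          (Nat.add_le_add_left (Nat.lt_succ_iff.mp (mem_range.mp hj)) m)
        rw [Nat.add_sub_cancel_left, Nat.add_sub_cancel_left] at key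
        rw [Nat.add_sub_add_left, pow_add]
        linear_combination θ ^ m * θ ^ j * ominus q θ (r - j) * key
    _ = qFall q (m + r : ℕ) m * θ ^ m := by
        rw [← mul_sum, sum_qBinom_mul_ominus hq0 hq1, mul_one]

end Positive

end QAnalogues

theorem stmt10_general (q : ℝ) (hq0 : 0 < q) (hq1 : q < 1) (n : ℕ) (β1 β2 : ℝ)
    (m1 : ℕ) :
    ∑ x1 ∈ Finset.range (n + 1), ∑ x2 ∈ Finset.range (n - x1 + 1),
      qFall q (x1 : ℤ) m1 * upmf q β1 β2 n x1 x2
      = qFall q (n : ℤ) m1 * β1 ^ m1 :=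
  calc ∑ x1 ∈ range (n + 1), ∑ x2 ∈ range (n - x1 + 1), qFall q x1 m1 * upmf q β1 β2 n x1 x2
      = ∑ x1 ∈ range (n + 1), qFall q x1 m1 * (qBinom q n x1 * β1 ^ x1 * ominus q β1 (n - x1)) :=
        sum_congr rfl fun x1 _ => by rw [← mul_sum, sum_upmf_eq hq0 hq1]
    _ = qFall q n m1 * β1 ^ m1 := sum_qFall_mul_qBinom_mul_ominus hq0 hq1 β1 n m1

theorem stmt10 (q : ℝ) (hq0 : 0 < q) (hq1 : q < 1) (n : ℕ) (β1 β2 : ℝ)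
    (hβ1 : 0 < β1) (hβ1' : β1 < 1) (hβ2 : 0 < β2) (hβ2' : β2 < 1)
    (m1 : ℕ) (hm1 : m1 ≤ n) :
    ∑ x1 ∈ Finset.range (n + 1), ∑ x2 ∈ Finset.range (n - x1 + 1),
      qFall q (x1 : ℤ) m1 * upmf q β1 β2 n x1 x2
      = qFall q (n : ℤ) m1 * β1 ^ m1 :=
  stmt10_general q hq0 hq1 n β1 β2 m1
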